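/- arXiv:2409.16397 — 2 statements merged into one kernel-verified Lean document; each statement's English description precedes it below -/
import Mathlib

section
/- Let A ≥ 2 be a real number, and assume that for all sufficiently large positive integers l and every integer b coprime to l there is a prime p ≡ b (mod l) with p < l·(log l)^A. Let ν be an even positive integer. Then for every ε > 0 and all sufficiently large real z the following holds: if L₁ and L₂ are squarefree positive integers, each of whose prime factors lies in the interval [(z/6)^{log z}, 2·z^{log z}·(log z)^{2A}], with gcd(L₁, L₂) = 1 and with L₁ having at least (z/(16·(log z)²))^{log z} distinct prime factors, then there exists a positive integer k ≤ 3·ν·z^A·(log z)^{2A} with gcd(k, ν·L₁·L₂) = 1 such that the number of primes p of the form p = d·k·ν + 1 with d ∣ L₁ and d having exactly ⌊z⌋ distinct prime factors is at least z^{z·log z − (2+ε)·z·log log z}. -/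
/-!
For a divisor `d ∣ L₁` with `ω(d) = ⌊z⌋`, the Heath-Brown hypothesis for the progression
`d·ν + 1 (mod d·ν²)` yields a prime `p = d·k·ν + 1` with `k ≡ 1 (mod ν)` and
`k < ν·(log (d·ν²))^A ≤ 3·ν·z^A·(log z)^{2A}`, because `d` is a product of `⌊z⌋` primes of size
at most `2·z^{log z}·(log z)^{2A}`. All prime factors of `L₁L₂` exceed this bound on `k`, so `k` is
coprime to `ν·L₁·L₂`. There are at least `binom(ω(L₁), ⌊z⌋)` such divisors `d`, so by pigeonhole
some `k` serves at least a `1/(3·ν·z^A·(log z)^{2A})` share of them, and this share is at least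
`z^{z log z − (2+ε) z log log z}`.
-/

open Real Filter Finset

namespace Nat

theorem exists_eq_mul_mul_add_one_of_modEq {p d ν : ℕ} (hp : 1 < p)
    (h : p ≡ d * ν + 1 [MOD d * ν ^ 2]) : ∃ k, 0 < k ∧ k.Coprime ν ∧ p = d * k * ν + 1 := by
  rw [sq, ← mul_assoc] at h
  have h₁ : p ≡ 1 [MOD d * ν] := (h.of_mul_right ν).trans (by simp [ModEq])
  obtain ⟨k, hk⟩ := (modEq_iff_dvd' hp.le).1 h₁.symm
  have hdν : d * ν ≠ 0 := by rintro h0; simp [h0] at hk; omega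
  have hk0 : k ≠ 0 := by rintro rfl; simp at hk; omega
  have hp' : p = d * ν * k + 1 := by omega
  refine ⟨k, pos_of_ne_zero hk0, ?_, by rw [hp']; ring⟩
  have h' : d * ν * k + 1 ≡ d * ν * 1 + 1 [MOD d * ν * ν] := by rwa [mul_one, ← hp']
  have hk1 : k ≡ 1 [MOD ν] := ModEq.mul_left_cancel' hdν (ModEq.add_right_cancel' 1 h')
  simpa using hk1.gcd_eq

theorem coprime_of_lt_primeFactors {k M : ℕ} (hk : 0 < k) (hM : M ≠ 0)
    (h : ∀ p ∈ M.primeFactors, k < p) : k.Coprime M :=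
  coprime_of_dvd fun p hp hpk hpM =>
    (h p (mem_primeFactors.2 ⟨hp, hpM, hM⟩)).not_ge (le_of_dvd hk hpk)

theorem choose_card_primeFactors_le_card_filter_divisors {L : ℕ} (hL : L ≠ 0) (m : ℕ) :
    L.primeFactors.card.choose m ≤ #{d ∈ L.divisors | d.primeFactors.card = m} := by
  rw [← card_powersetCard]
  refine card_le_card_of_injOn (fun s => ∏ p ∈ s, p) (fun s hs => ?_) (fun s hs t ht hst => ?_)
  · obtain ⟨hsL, rfl⟩ := mem_powersetCard.1 hs
    have hprime : ∀ p ∈ s, p.Prime := fun p hp => prime_of_mem_primeFactors (hsL hp)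
    simp only [coe_filter, Set.mem_ofPred_eq, mem_divisors, primeFactors_prod hprime, and_true]
    exact ⟨prod_primes_dvd L (fun p hp => (hprime p hp).prime)
      (fun p hp => dvd_of_mem_primeFactors (hsL hp)), hL⟩
  · have hprime : ∀ s ∈ L.primeFactors.powersetCard m, ∀ p ∈ s, p.Prime :=
      fun s hs p hp => prime_of_mem_primeFactors ((mem_powersetCard.1 hs).1 hp)
    rw [← primeFactors_prod (hprime s hs), ← primeFactors_prod (hprime t ht)]
    exact congrArg primeFactors hst

theorem cast_le_pow_card_primeFactors {d : ℕ} {B : ℝ} (hd : Squarefree d)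
    (hB : ∀ p ∈ d.primeFactors, (p : ℝ) ≤ B) : (d : ℝ) ≤ B ^ d.primeFactors.card := by
  rw [← prod_primeFactors_of_squarefree hd, primeFactors_prod_primeFactors, cast_prod,
    ← prod_const]
  exact prod_le_prod (fun _ _ => cast_nonneg _) hB

end Nat

theorem Squarefree.log_le_card_primeFactors_mul_log {d : ℕ} {B : ℝ} (hd : Squarefree d)
    (hdB : ∀ p ∈ d.primeFactors, (p : ℝ) ≤ B) : log d ≤ d.primeFactors.card * log B :=
  (log_le_log (mod_cast Nat.pos_of_ne_zero hd.ne_zero)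
    (Nat.cast_le_pow_card_primeFactors hd hdB)).trans_eq (log_pow _ _)

theorem Finset.exists_le_card_filter_of_forall_exists {α β : Type*} {s : Finset α}
    {t : Finset β} {P : α → β → Prop} [∀ a b, Decidable (P a b)] {T : ℝ} (ht : t.Nonempty)
    (h : ∀ a ∈ s, ∃ b ∈ t, P a b) (hcard : #t * T ≤ #s) :
    ∃ b ∈ t, T ≤ #{a ∈ s | P a b} := by
  classical
  have : Nonempty β := ht.to_subtype.map Subtype.val
  choose! f hft hP using h
  obtain ⟨b, hb, hT⟩ := exists_le_card_fiber_of_nsmul_le_card_of_maps_to (M := ℝ) hft ht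
    (by rwa [nsmul_eq_mul])
  refine ⟨b, hb, hT.trans ?_⟩
  refine mod_cast card_le_card fun a ha => ?_
  rw [mem_filter] at ha ⊢
  exact ⟨ha.1, ha.2 ▸ hP a ha.1⟩

theorem Nat.rpow_sub_one_le_choose_floor {n : ℕ} {z Y : ℝ} (hz : 1 ≤ z) (hY : 2 * z ≤ Y)
    (hn : Y ≤ n) : (Y / (2 * z)) ^ (z - 1) ≤ n.choose ⌊z⌋₊ := by
  set m := ⌊z⌋₊
  have hm : (1 : ℝ) ≤ m := by exact_mod_cast Nat.le_floor (by exact_mod_cast hz)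
  have hmz : (m : ℝ) ≤ z := Nat.floor_le (by linarith)
  have hzm : z - 1 ≤ m := by linarith [Nat.lt_floor_add_one z]
  have hX : 1 ≤ Y / (2 * z) := by rw [le_div_iff₀ (by linarith)]; linarith
  have hmn : m ≤ n + 1 := by exact_mod_cast (by linarith : (m : ℝ) ≤ n + 1)
  have hbase : Y / (2 * z) ≤ ((n + 1 - m : ℕ) : ℝ) / m := by
    rw [div_le_div_iff₀ (by linarith) (by linarith), Nat.cast_sub hmn]
    push_cast
    nlinarith
  calc (Y / (2 * z)) ^ (z - 1) ≤ (Y / (2 * z)) ^ (m : ℝ) := rpow_le_rpow_of_exponent_le hX hzm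
    _ = (Y / (2 * z)) ^ m := rpow_natCast _ _
    _ ≤ (((n + 1 - m : ℕ) : ℝ) / m) ^ m := pow_le_pow_left₀ (by linarith) hbase m
    _ = ((n + 1 - m : ℕ) : ℝ) ^ m / (m : ℝ) ^ m := div_pow _ _ m
    _ ≤ ((n + 1 - m : ℕ) : ℝ) ^ m / (m.factorial : ℝ) := by
      gcongr
      exact_mod_cast Nat.factorial_le_pow m
    _ ≤ n.choose m := Nat.pow_le_choose m n

theorem eventually_exists_prime_mul_mul_add_one {A : ℝ}
    (hHB : ∀ᶠ l : ℕ in atTop, ∀ b : ℕ, Nat.Coprime b l →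
      ∃ p : ℕ, p.Prime ∧ p ≡ b [MOD l] ∧ (p : ℝ) < (l : ℝ) * (Real.log l) ^ A)
    {ν : ℕ} (hν : 0 < ν) :
    ∀ᶠ d : ℕ in atTop, ∃ k : ℕ, 0 < k ∧ k.Coprime ν ∧
      (k : ℝ) < ν * log (d * ν ^ 2 : ℕ) ^ A ∧ (d * k * ν + 1).Prime := by
  have hl : Tendsto (fun d => d * ν ^ 2) atTop atTop :=
    tendsto_atTop_mono (fun d => Nat.le_mul_of_pos_right d (by positivity)) tendsto_id
  filter_upwards [hl.eventually hHB, eventually_gt_atTop 0] with d hd hd0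
  have hb : (d * ν + 1).Coprime (d * ν ^ 2) :=
    ((Nat.coprime_self_add_left.2 (Nat.coprime_one_left _)).pow_right 2).coprime_dvd_right
      ⟨d, by ring⟩
  obtain ⟨p, hp, hmod, hlt⟩ := hd (d * ν + 1) hb
  obtain ⟨k, hk0, hkν, rfl⟩ := Nat.exists_eq_mul_mul_add_one_of_modEq hp.one_lt hmod
  refine ⟨k, hk0, hkν, ?_, hp⟩
  have hdν : (0 : ℝ) < d * ν := by positivity
  refine lt_of_mul_lt_mul_left ?_ hdν.le
  push_cast at hlt ⊢
  linarith

theorem Real.log_mul_rpow_mul_log_rpow {C z : ℝ} (hC : 0 < C) (hz : 1 < z) (a b : ℝ) :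
    log (C * z ^ a * log z ^ b) = log C + a * log z + b * log (log z) := by
  have hu : 0 < log z := log_pos hz
  rw [log_mul (by positivity) (by positivity), log_mul hC.ne' (by positivity),
    log_rpow (by linarith), log_rpow hu]

theorem eventually_mul_log_sq_le (c : ℝ) : ∀ᶠ z : ℝ in atTop, c * log z ^ 2 ≤ z := by
  have hc : 0 < |c| + 1 := by positivity
  filter_upwards [isLittleO_pow_log_id_atTop.bound (inv_pos.2 hc), eventually_ge_atTop 0]
    with z hz hz0
  rw [norm_pow, Real.norm_eq_abs, sq_abs, id, Real.norm_of_nonneg hz0] at hz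
  calc c * log z ^ 2 ≤ (|c| + 1) * log z ^ 2 := by
        gcongr; linarith [le_abs_self c]
    _ ≤ (|c| + 1) * ((|c| + 1)⁻¹ * z) := by gcongr
    _ = z := by field_simp

theorem eventually_mul_rpow_mul_log_rpow_lt {C : ℝ} (hC : 0 < C) {A : ℝ} (hA : 0 ≤ A) :
    ∀ᶠ z : ℝ in atTop, C * z ^ A * log z ^ (2 * A) < (z / 6) ^ log z := by
  filter_upwards [eventually_gt_atTop 6,
    tendsto_log_atTop.eventually_ge_atTop (|log C| + 3 * A + log 6 + 1)] with z hz hu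
  have hz0 : 0 < z := by linarith
  have hu1 : 1 < log z := by
    linarith [abs_nonneg (log C), log_pos (by norm_num : (1 : ℝ) < 6)]
  have hv : log (log z) ≤ log z - 1 := log_le_sub_one_of_pos (by linarith)
  rw [← log_lt_log_iff (by positivity) (by positivity), log_mul_rpow_mul_log_rpow hC (by linarith),
    log_rpow (by positivity), log_div hz0.ne' (by norm_num)]
  have h₁ := mul_le_mul_of_nonneg_left hu (by linarith : 0 ≤ log z)
  have h₂ : 0 ≤ (log z - 1) * |log C| := mul_nonneg (by linarith) (abs_nonneg _)
  have h₃ : 0 ≤ A * (log z - log (log z)) := mul_nonneg hA (by linarith)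
  linarith [le_abs_self (log C)]

theorem eventually_rpow_le_mul_rpow_mul_log_rpow {A a : ℝ} (hA : 0 < A) (ha : 1 < a) (C : ℝ) :
    ∀ᶠ z : ℝ in atTop, ∀ x : ℝ, 0 ≤ x →
      x ≤ z * log (2 * z ^ log z * log z ^ (2 * A)) + C → x ^ A ≤ a * z ^ A * log z ^ (2 * A) := by
  set c := a ^ A⁻¹
  have hc : 1 < c := one_lt_rpow ha (inv_pos.2 hA)
  filter_upwards [eventually_gt_atTop 3,
    tendsto_log_atTop.eventually_ge_atTop ((log 2 + 2 * A + |C|) / (c - 1))] with z hz hu x hx hxle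
  have hz0 : 0 < z := by linarith
  have hu1 : 1 ≤ log z := by
    rw [le_log_iff_exp_le hz0]; linarith [exp_one_lt_d9]
  have hv : log (log z) ≤ log z - 1 := log_le_sub_one_of_pos (by linarith)
  rw [div_le_iff₀ (by linarith)] at hu
  rw [log_mul_rpow_mul_log_rpow two_pos (by linarith)] at hxle
  have hbase : x ≤ c * z * log z ^ 2 := by
    have h₁ := mul_le_mul_of_nonneg_left hu (by positivity : 0 ≤ z * log z)
    have h₂ : 0 ≤ z * (log z - 1) * log 2 :=
      mul_nonneg (mul_nonneg hz0.le (by linarith)) (log_nonneg (by norm_num))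
    have h₃ : 0 ≤ A * z * (log z - log (log z)) :=
      mul_nonneg (mul_nonneg hA.le hz0.le) (by linarith)
    have h₄ : 0 ≤ (z * log z - 1) * |C| := mul_nonneg (by nlinarith) (abs_nonneg _)
    linarith [le_abs_self C]
  calc x ^ A ≤ (c * z * log z ^ 2) ^ A := rpow_le_rpow hx hbase hA.le
    _ = a * z ^ A * log z ^ (2 * A) := by
      rw [mul_rpow (by positivity) (by positivity), mul_rpow (by positivity) (by positivity),
        ← rpow_mul (by linarith), inv_mul_cancel₀ hA.ne', rpow_one, ← rpow_natCast,
        ← rpow_mul (by linarith)]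
      norm_num

theorem eventually_two_mul_le_rpow_log :
    ∀ᶠ z : ℝ in atTop, 2 * z ≤ (z / (16 * log z ^ 2)) ^ log z := by
  filter_upwards [eventually_mul_log_sq_le (16 * exp 2), eventually_ge_atTop 3] with z hz hz3
  have hz0 : 0 < z := by linarith
  have hu : 0 < log z := log_pos (by linarith)
  have hbase : exp 2 ≤ z / (16 * log z ^ 2) := by
    rw [le_div_iff₀ (by positivity)]; linarith
  calc 2 * z ≤ z ^ 2 := by nlinarith
    _ = exp 2 ^ log z := by
      rw [← exp_mul, show 2 * log z = log (z ^ 2) by rw [log_pow]; norm_num,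
        exp_log (by positivity)]
    _ ≤ (z / (16 * log z ^ 2)) ^ log z := rpow_le_rpow (exp_pos 2).le hbase hu.le

theorem eventually_mul_rpow_le_rpow_sub_one {C : ℝ} (hC : 0 < C) {A : ℝ} (hA : 0 ≤ A)
    {ε : ℝ} (hε : 0 < ε) :
    ∀ᶠ z : ℝ in atTop, C * z ^ A * log z ^ (2 * A) *
        z ^ (z * log z - (2 + ε) * z * log (log z)) ≤
      ((z / (16 * log z ^ 2)) ^ log z / (2 * z)) ^ (z - 1) := by
  filter_upwards [eventually_mul_log_sq_le (1 + |log C| + 3 * A), eventually_gt_atTop 3,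
    (tendsto_log_atTop.comp tendsto_log_atTop).eventually_ge_atTop
      ((log 16 + 2 + log 2) / ε)] with z hz hz3 hv
  have hz0 : 0 < z := by linarith
  have hu1 : 1 ≤ log z := by
    rw [le_log_iff_exp_le hz0]; linarith [exp_one_lt_d9]
  have hvu : log (log z) ≤ log z - 1 := log_le_sub_one_of_pos (by linarith)
  simp only [Function.comp_apply] at hv
  rw [div_le_iff₀ hε] at hv
  -- After taking logarithms the terms `z (log z)²` cancel, and `ε z log z log log z` dominates.
  rw [← log_le_log_iff (by positivity) (by positivity), log_mul (by positivity) (by positivity),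
    log_mul_rpow_mul_log_rpow hC (by linarith), log_rpow hz0, log_rpow (by positivity),
    log_div (by positivity) (by positivity), log_rpow (by positivity),
    log_div hz0.ne' (by positivity), log_mul (by norm_num) (by positivity), log_pow,
    log_mul (by norm_num) hz0.ne']
  push_cast
  set u := log z
  set v := log u
  set K := 1 + |log C| + 3 * A
  have hK : 0 ≤ K := by positivity
  have hv0 : 0 ≤ v := log_nonneg hu1
  have hl2 : 0 ≤ log 2 := log_nonneg (by norm_num)
  have hl16 : 0 ≤ log 16 := log_nonneg (by norm_num)
  have hKu : K * u ≤ z := le_trans (mul_le_mul_of_nonneg_left (by nlinarith) hK) hz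
  have h₁ := mul_le_mul_of_nonneg_left hv (by positivity : 0 ≤ z * u)
  have h₂ : 0 ≤ z * (u - 1) * log 2 := mul_nonneg (mul_nonneg hz0.le (by linarith)) hl2
  have h₃ := mul_le_mul_of_nonneg_right hKu (by linarith : 0 ≤ u)
  have h₄ : 0 ≤ |log C| * (u ^ 2 - 1) := mul_nonneg (abs_nonneg _) (by nlinarith)
  have h₅ : 0 ≤ A * (u ^ 2 - u) := mul_nonneg hA (by nlinarith)
  have h₆ : 0 ≤ A * (u ^ 2 - v) := mul_nonneg hA (by nlinarith)
  have h₇ : 0 ≤ u * log 16 := mul_nonneg (by linarith) hl16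
  have h₈ : 0 ≤ u * v := mul_nonneg (by linarith) hv0
  linarith [le_abs_self (log C)]

theorem exists_coprime_prime_of_dvd {A z P B K : ℝ} {ν N L₁ L₂ d : ℕ} (hν : ν ≠ 0)
    (hN : ∀ d ≥ N, ∃ k : ℕ, 0 < k ∧ k.Coprime ν ∧
      (k : ℝ) < ν * log (d * ν ^ 2 : ℕ) ^ A ∧ (d * k * ν + 1).Prime)
    (hlog : ∀ x : ℝ, 0 ≤ x → x ≤ z * log B + log (ν ^ 2) → x ^ A ≤ K)
    (hL₁ : Squarefree L₁) (hL₂ : L₂ ≠ 0) (hP₁ : ∀ p ∈ L₁.primeFactors, P ≤ p ∧ p ≤ B)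
    (hP₂ : ∀ p ∈ L₂.primeFactors, P ≤ p) (hNP : N ≤ P) (hKP : ν * K < P)
    (hdL : d ∣ L₁) (hω : 0 < d.primeFactors.card) (hωz : (d.primeFactors.card : ℝ) ≤ z) :
    ∃ k : ℕ, 0 < k ∧ (k : ℝ) ≤ ν * K ∧ k.Coprime (ν * L₁ * L₂) ∧ (d * k * ν + 1).Prime := by
  have hd : Squarefree d := hL₁.squarefree_of_dvd hdL
  have hPd : ∀ p ∈ d.primeFactors, P ≤ p ∧ p ≤ B :=
    fun p hp => hP₁ p (Nat.primeFactors_mono hdL hL₁.ne_zero hp)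
  obtain ⟨q, hq⟩ := card_pos.1 hω
  have hqd : q ≤ d := Nat.le_of_dvd (Nat.pos_of_ne_zero hd.ne_zero) (Nat.dvd_of_mem_primeFactors hq)
  have hdN : (N : ℝ) ≤ d := hNP.trans ((hPd q hq).1.trans (mod_cast hqd))
  obtain ⟨k, hk0, hkν, hkA, hprime⟩ := hN d (mod_cast hdN)
  have hB : 1 ≤ B := le_trans (mod_cast (Nat.prime_of_mem_primeFactors hq).one_le) (hPd q hq).2
  have hlogd : log (d * ν ^ 2 : ℕ) ≤ z * log B + log (ν ^ 2) := by
    push_cast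
    rw [log_mul (mod_cast hd.ne_zero) (by positivity)]
    gcongr
    exact (hd.log_le_card_primeFactors_mul_log fun p hp => (hPd p hp).2).trans
      (mul_le_mul_of_nonneg_right hωz (log_nonneg hB))
  have hkK : (k : ℝ) ≤ ν * K :=
    hkA.le.trans (by gcongr; exact hlog _ (log_natCast_nonneg _) hlogd)
  have hcop : ∀ L : ℕ, L ≠ 0 → (∀ p ∈ L.primeFactors, P ≤ p) → k.Coprime L :=
    fun L hL hLP => Nat.coprime_of_lt_primeFactors hk0 hL fun p hp =>
      mod_cast (hkK.trans_lt hKP).trans_le (hLP p hp)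
  exact ⟨k, hk0, hkK, (hkν.mul_right (hcop L₁ hL₁.ne_zero fun p hp => (hP₁ p hp).1)).mul_right
    (hcop L₂ hL₂ hP₂), hprime⟩

theorem eventually_exists_coprime_prime_of_dvd {A : ℝ} (hA : 0 < A)
    (hHB : ∀ᶠ l : ℕ in atTop, ∀ b : ℕ, Nat.Coprime b l →
      ∃ p : ℕ, p.Prime ∧ p ≡ b [MOD l] ∧ (p : ℝ) < (l : ℝ) * (Real.log l) ^ A)
    {ν : ℕ} (hν : 0 < ν) :
    ∀ᶠ z : ℝ in atTop, ∀ L₁ L₂ : ℕ, Squarefree L₁ → L₂ ≠ 0 →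
      (∀ p ∈ L₁.primeFactors, (z / 6) ^ log z ≤ p ∧ p ≤ 2 * z ^ log z * log z ^ (2 * A)) →
      (∀ p ∈ L₂.primeFactors, (z / 6) ^ log z ≤ p) →
      ∀ d, d ∣ L₁ → d.primeFactors.card = ⌊z⌋₊ →
        ∃ k : ℕ, 0 < k ∧ (k : ℝ) ≤ 3 * ν * z ^ A * log z ^ (2 * A) ∧
          k.Coprime (ν * L₁ * L₂) ∧ (d * k * ν + 1).Prime := by
  obtain ⟨N, hN⟩ := eventually_atTop.1 (eventually_exists_prime_mul_mul_add_one hHB hν)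
  filter_upwards [eventually_mul_rpow_mul_log_rpow_lt (C := N + 1) (by positivity) le_rfl,
    eventually_mul_rpow_mul_log_rpow_lt (C := 3 * ν) (by positivity) hA.le,
    eventually_rpow_le_mul_rpow_mul_log_rpow hA (by norm_num : (1 : ℝ) < 3) (log (ν ^ 2)),
    eventually_ge_atTop 1] with z hNP hKP hlog hz1 L₁ L₂ hL₁ hL₂ hP₁ hP₂ d hdL hω
  simp only [rpow_zero, mul_zero, mul_one] at hNP
  obtain ⟨k, hk0, hkK, hcop, hprime⟩ := exists_coprime_prime_of_dvd hν.ne' hN hlog hL₁ hL₂ hP₁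
    hP₂ (by linarith) (by linarith) hdL (by rw [hω]; exact Nat.floor_pos.2 hz1)
    (by rw [hω]; exact Nat.floor_le (by linarith))
  exact ⟨k, hk0, by linarith, hcop, hprime⟩

theorem eventually_mul_rpow_le_card_filter_divisors {C : ℝ} (hC : 0 < C) {A : ℝ} (hA : 0 ≤ A)
    {ε : ℝ} (hε : 0 < ε) :
    ∀ᶠ z : ℝ in atTop, ∀ L : ℕ, L ≠ 0 →
      (z / (16 * log z ^ 2)) ^ log z ≤ L.primeFactors.card →
      C * z ^ A * log z ^ (2 * A) * z ^ (z * log z - (2 + ε) * z * log (log z)) ≤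
        #{d ∈ L.divisors | d.primeFactors.card = ⌊z⌋₊} := by
  filter_upwards [eventually_mul_rpow_le_rpow_sub_one hC hA hε, eventually_two_mul_le_rpow_log,
    eventually_ge_atTop 1] with z hcount h2z hz1 L hL hn
  calc _ ≤ _ := hcount
    _ ≤ L.primeFactors.card.choose ⌊z⌋₊ := Nat.rpow_sub_one_le_choose_floor hz1 h2z hn
    _ ≤ _ := mod_cast Nat.choose_card_primeFactors_le_card_filter_divisors hL _

theorem exists_k1_many_primes_general (A : ℝ) (hA : 2 ≤ A)
    (hHB : ∀ᶠ l : ℕ in Filter.atTop, ∀ b : ℕ, Nat.Coprime b l →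
      ∃ p : ℕ, p.Prime ∧ p ≡ b [MOD l] ∧ (p : ℝ) < (l : ℝ) * (Real.log l) ^ A)
    (ν : ℕ) (hν : 0 < ν) :
    ∀ ε > (0 : ℝ), ∀ᶠ z : ℝ in Filter.atTop, ∀ L₁ L₂ : ℕ,
      Squarefree L₁ → Squarefree L₂ →
      (∀ p ∈ L₁.primeFactors,
        (z / 6) ^ Real.log z ≤ (p : ℝ) ∧
          (p : ℝ) ≤ 2 * z ^ Real.log z * (Real.log z) ^ (2 * A)) →
      (∀ p ∈ L₂.primeFactors,
        (z / 6) ^ Real.log z ≤ (p : ℝ) ∧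
          (p : ℝ) ≤ 2 * z ^ Real.log z * (Real.log z) ^ (2 * A)) →
      Nat.gcd L₁ L₂ = 1 →
      (z / (16 * (Real.log z) ^ 2)) ^ Real.log z ≤ (L₁.primeFactors.card : ℝ) →
      ∃ k : ℕ, 0 < k ∧ (k : ℝ) ≤ 3 * ν * z ^ A * (Real.log z) ^ (2 * A) ∧
        Nat.gcd k (ν * L₁ * L₂) = 1 ∧
        z ^ (z * Real.log z - (2 + ε) * z * Real.log (Real.log z)) ≤
          ((L₁.divisors.filter
            (fun d => d.primeFactors.card = ⌊z⌋₊ ∧ (d * k * ν + 1).Prime)).card : ℝ) := by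
  intro ε hε
  have hA0 : 0 < A := by linarith
  filter_upwards [eventually_exists_coprime_prime_of_dvd hA0 hHB hν,
    eventually_mul_rpow_le_card_filter_divisors (C := 3 * ν) (by positivity) hA0.le hε,
    eventually_gt_atTop 1] with z hk hcount hz1
  intro L₁ L₂ hL₁ hL₂ hP₁ hP₂ _ hn
  set K := 3 * ν * z ^ A * log z ^ (2 * A)
  set T := z ^ (z * log z - (2 + ε) * z * log (log z))
  have hK : 0 < K := by
    have := log_pos hz1
    have : (0 : ℝ) < ν := mod_cast hν
    positivity
  have hT : 0 < T := rpow_pos_of_pos (by linarith) _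
  set t := {k ∈ Icc 1 ⌊K⌋₊ | k.Coprime (ν * L₁ * L₂)}
  set S := {d ∈ L₁.divisors | d.primeFactors.card = ⌊z⌋₊}
  have hS : ∀ d ∈ S, ∃ k ∈ t, (d * k * ν + 1).Prime := by
    intro d hd
    obtain ⟨⟨hdL, -⟩, hω⟩ := by simpa only [S, mem_filter, Nat.mem_divisors] using hd
    obtain ⟨k, hk0, hkK, hcop, hprime⟩ :=
      hk L₁ L₂ hL₁ hL₂.ne_zero hP₁ (fun p hp => (hP₂ p hp).1) d hdL hω
    exact ⟨k, mem_filter.2 ⟨mem_Icc.2 ⟨hk0, Nat.le_floor hkK⟩, hcop⟩, hprime⟩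
  have hKS : K * T ≤ #S := hcount L₁ hL₁.ne_zero hn
  have ht : t.Nonempty := by
    obtain ⟨d, hd⟩ := card_pos.1 (mod_cast (mul_pos hK hT).trans_le hKS)
    obtain ⟨k, hk, -⟩ := hS d hd
    exact ⟨k, hk⟩
  have htK : (#t : ℝ) ≤ K := (Nat.cast_le.2 <| (card_filter_le _ _).trans (by simp)).trans
    (Nat.floor_le hK.le)
  obtain ⟨k, hkt, hk⟩ := exists_le_card_filter_of_forall_exists ht hS
    ((mul_le_mul_of_nonneg_right htK hT.le).trans hKS)
  obtain ⟨hkK, hcop⟩ := mem_filter.1 hkt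
  refine ⟨k, (mem_Icc.1 hkK).1, (Nat.le_floor_iff hK.le).1 (mem_Icc.1 hkK).2, hcop, ?_⟩
  rwa [filter_filter] at hk

/-- Construction of the first prime set `𝒫_{k₁}`: assuming the strong
Heath-Brown conjecture with exponent `A`, for every even positive `ν`, every
`ε > 0` and all sufficiently large `z`, given `L₁, L₂` as in the construction,
there is a positive `k ≤ 3·ν·z^A·(log z)^{2A}` coprime to `ν·L₁·L₂` such that
the number of primes `p = d·k·ν + 1` with `d ∣ L₁` and `ω(d) = ⌊z⌋` is at
least `z^{z·log z − (2+ε)·z·log log z}`. -/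
theorem exists_k1_many_primes (A : ℝ) (hA : 2 ≤ A)
    (hHB : ∀ᶠ l : ℕ in Filter.atTop, ∀ b : ℕ, Nat.Coprime b l →
      ∃ p : ℕ, p.Prime ∧ p ≡ b [MOD l] ∧ (p : ℝ) < (l : ℝ) * (Real.log l) ^ A)
    (ν : ℕ) (hν : 0 < ν) (hνeven : Even ν) :
    ∀ ε > (0 : ℝ), ∀ᶠ z : ℝ in Filter.atTop, ∀ L₁ L₂ : ℕ,
      Squarefree L₁ → Squarefree L₂ →
      (∀ p ∈ L₁.primeFactors,
        (z / 6) ^ Real.log z ≤ (p : ℝ) ∧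
          (p : ℝ) ≤ 2 * z ^ Real.log z * (Real.log z) ^ (2 * A)) →
      (∀ p ∈ L₂.primeFactors,
        (z / 6) ^ Real.log z ≤ (p : ℝ) ∧
          (p : ℝ) ≤ 2 * z ^ Real.log z * (Real.log z) ^ (2 * A)) →
      Nat.gcd L₁ L₂ = 1 →
      (z / (16 * (Real.log z) ^ 2)) ^ Real.log z ≤ (L₁.primeFactors.card : ℝ) →
      ∃ k : ℕ, 0 < k ∧ (k : ℝ) ≤ 3 * ν * z ^ A * (Real.log z) ^ (2 * A) ∧
        Nat.gcd k (ν * L₁ * L₂) = 1 ∧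
        z ^ (z * Real.log z - (2 + ε) * z * Real.log (Real.log z)) ≤
          ((L₁.divisors.filter
            (fun d => d.primeFactors.card = ⌊z⌋₊ ∧ (d * k * ν + 1).Prime)).card : ℝ) :=
  exists_k1_many_primes_general A hA hHB ν hν
end

section
/- Let N ≥ 2 be an integer and let s = s(N) be the smallest positive integer such that every sequence of s units of ℤ/Nℤ contains a nonempty subsequence whose product is 1. Let P be a finite set of primes not dividing N, let y be a real number with p ≤ y for every p ∈ P, and let v = |P| and let t be an integer with v > t > s. Then the number of squarefree integers n such that every prime factor of n lies in P, n has at most t (and at least one) prime factors, and n ≡ 1 (mod N), is at least C(v,t)/C(v,s), and every such n satisfies n ≤ y^t, where C(·,·) denotes the binomial coefficient. -/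
/-!
Take a `t`-subset `T` of `P` and, as long as at least `s` of its primes are left, split off a
nonempty subset whose residues multiply to `1` in `(ℤ/Nℤ)ˣ`. The union `S ⊆ T` of the pieces has
`∏_{p ∈ S} p ≡ 1 (mod N)` and `|T \ S| < s`. The fibre of `T ↦ S` over a set `S` of size `k`
embeds, via `T ↦ T \ S`, into the `(t - k)`-subsets of `P \ S`, so it has at most
`C(v - k, t - k) ≤ C(v, s)` elements; hence there are at least `C(v, t) / C(v, s)` such `S`.
-/

open Finset

def HasProdOneSublist (G : Type*) [Monoid G] (s : ℕ) : Prop :=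
  ∀ l : List G, l.length = s → ∃ t : List G, t.Sublist l ∧ t ≠ [] ∧ t.prod = 1

namespace HasProdOneSublist

variable {G ι : Type*} [CommMonoid G] {s : ℕ}

theorem exists_subset_prod_eq_one (h : HasProdOneSublist G s) (u : ι → G) {T : Finset ι}
    (hT : s ≤ #T) : ∃ S ⊆ T, S.Nonempty ∧ ∏ i ∈ S, u i = 1 := by
  classical
  obtain ⟨w, hw, hw_ne, hw_prod⟩ := h ((T.toList.take s).map u) (by simp [hT])
  obtain ⟨l, hl, rfl⟩ := List.sublist_map_iff.mp hw
  have hlT : l.Sublist T.toList := hl.trans (List.take_sublist _ _)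
  refine ⟨l.toFinset, fun i hi ↦ mem_toList.mp (hlT.subset (List.mem_toFinset.mp hi)), ?_, ?_⟩
  · simpa [List.toFinset_nonempty_iff] using hw_ne
  · rwa [List.prod_toFinset u (T.nodup_toList.sublist hlT)]

theorem exists_subset_prod_eq_one_card_sdiff_lt [DecidableEq ι] (h : HasProdOneSublist G s)
    (u : ι → G) (T : Finset ι) : ∃ S ⊆ T, ∏ i ∈ S, u i = 1 ∧ #(T \ S) < s := by
  induction T using Finset.strongInduction with
  | H T ih =>
    by_cases hT : #T < s
    · exact ⟨∅, empty_subset T, prod_empty, by simpa using hT⟩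
    obtain ⟨S₀, hS₀T, hS₀, hS₀_prod⟩ := h.exists_subset_prod_eq_one u (not_lt.mp hT)
    obtain ⟨S₁, hS₁, hS₁_prod, hS₁_card⟩ := ih (T \ S₀) (sdiff_ssubset hS₀T hS₀)
    have hdisj : Disjoint S₀ S₁ := disjoint_of_subset_right hS₁ disjoint_sdiff
    refine ⟨S₀ ∪ S₁, union_subset hS₀T (hS₁.trans sdiff_subset), ?_, ?_⟩
    · rw [prod_union hdisj, hS₀_prod, hS₁_prod, one_mul]
    · rwa [sdiff_sdiff_left] at hS₁_card

end HasProdOneSublist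

theorem Nat.choose_sub_le_choose {v t k s : ℕ} (hkt : k ≤ t) (htv : t ≤ v) (hts : t - k ≤ s)
    (hst : s ≤ t) : (v - k).choose (t - k) ≤ v.choose s :=
  calc (v - k).choose (t - k) = (v - k).choose (v - t) := Nat.choose_symm_of_eq_add (by omega)
    _ ≤ (v - t + s).choose (v - t) := Nat.choose_le_choose _ (by omega)
    _ = (v - t + s).choose s := Nat.choose_symm_add
    _ ≤ v.choose s := Nat.choose_le_choose _ (by omega)

section Counting

variable {α : Type*} [DecidableEq α] {P : Finset α} {f : Finset α → Finset α} {s t : ℕ}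

theorem card_filter_powersetCard_eq_le (hf : ∀ T, f T ⊆ T) (hfs : ∀ T, #(T \ f T) < s)
    (hst : s ≤ t) (htP : t ≤ #P) (S : Finset α) :
    #{T ∈ P.powersetCard t | f T = S} ≤ (#P).choose s := by
  obtain hempty | ⟨T₀, hT₀⟩ := {T ∈ P.powersetCard t | f T = S}.eq_empty_or_nonempty
  · simp [hempty]
  obtain ⟨⟨hT₀P, hT₀t⟩, rfl⟩ : (T₀ ⊆ P ∧ #T₀ = t) ∧ f T₀ = S := by simpa using hT₀
  have hST₀ := hf T₀
  calc #{T ∈ P.powersetCard t | f T = f T₀}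
      ≤ #((P \ f T₀).powersetCard (t - #(f T₀))) := by
        refine card_le_card_of_injOn (· \ f T₀) (fun T hT ↦ ?_) fun T₁ hT₁ T₂ hT₂ heq ↦ ?_
        · simp only [mem_coe, mem_filter, mem_powersetCard] at hT
          obtain ⟨⟨hTP, hTt⟩, hfT⟩ := hT
          rw [mem_coe, mem_powersetCard]
          refine ⟨sdiff_subset_sdiff hTP le_rfl, ?_⟩
          rw [card_sdiff_of_subset (hfT ▸ hf T), hTt]
        · simp only [mem_coe, mem_filter, mem_powersetCard] at hT₁ hT₂
          have := congrArg (· ∪ f T₀) heq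
          simpa [sdiff_union_of_subset (hT₁.2 ▸ hf T₁), sdiff_union_of_subset (hT₂.2 ▸ hf T₂)]
            using this
    _ = (#P - #(f T₀)).choose (t - #(f T₀)) := by
        rw [card_powersetCard, card_sdiff_of_subset (hST₀.trans hT₀P)]
    _ ≤ (#P).choose s := Nat.choose_sub_le_choose (hT₀t ▸ card_le_card hST₀) htP
        (by have := hfs T₀; rw [card_sdiff_of_subset hST₀] at this; omega) hst

theorem choose_le_mul_card_image_powersetCard (hf : ∀ T, f T ⊆ T) (hfs : ∀ T, #(T \ f T) < s)
    (hst : s ≤ t) (htP : t ≤ #P) :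
    (#P).choose t ≤ (#P).choose s * #((P.powersetCard t).image f) := by
  rw [← card_powersetCard]
  exact card_le_mul_card_image _ _ fun S _ ↦ card_filter_powersetCard_eq_le hf hfs hst htP S

end Counting

theorem Nat.squarefree_prod_of_prime {S : Finset ℕ} (hS : ∀ p ∈ S, p.Prime) :
    Squarefree (∏ p ∈ S, p) :=
  squarefree_prod_of_pairwise_isCoprime
    (fun p hp q hq hpq ↦ Nat.coprime_iff_isRelPrime.mp
      ((Nat.coprime_primes (hS p hp) (hS q hq)).mpr hpq))
    fun p hp ↦ (hS p hp).squarefree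

theorem Nat.finite_setOf_squarefree_primeFactors_subset (P : Finset ℕ) :
    {n : ℕ | Squarefree n ∧ n.primeFactors ⊆ P}.Finite :=
  (P.powerset.image fun S ↦ ∏ p ∈ S, p).finite_toSet.subset fun n ⟨hn, hnP⟩ ↦
    mem_image.mpr ⟨n.primeFactors, mem_powerset.mpr hnP, Nat.prod_primeFactors_of_squarefree hn⟩

theorem Nat.cast_le_pow_of_squarefree {R : Type*} [CommSemiring R] [PartialOrder R]
    [IsOrderedRing R] {n t : ℕ} {y : R} (hn : Squarefree n) (hy₁ : 1 ≤ y)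
    (hy : ∀ p ∈ n.primeFactors, (p : R) ≤ y) (ht : #n.primeFactors ≤ t) : (n : R) ≤ y ^ t :=
  calc (n : R) = ∏ p ∈ n.primeFactors, (p : R) := by
        rw [← Nat.cast_prod, Nat.prod_primeFactors_of_squarefree hn]
    _ ≤ ∏ _p ∈ n.primeFactors, y := prod_le_prod (fun p _ ↦ p.cast_nonneg) hy
    _ = y ^ #n.primeFactors := prod_const y
    _ ≤ y ^ t := pow_le_pow_right₀ hy₁ ht

theorem Nat.prod_modEq_one_of_prod_units_eq_one {N : ℕ} {S : Finset ℕ} {u : ℕ → (ZMod N)ˣ}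
    (hu : ∀ p ∈ S, (u p : ZMod N) = p) (h : ∏ p ∈ S, u p = 1) : ∏ p ∈ S, p ≡ 1 [MOD N] := by
  rw [← ZMod.natCast_eq_natCast_iff, Nat.cast_prod, Nat.cast_one, ← Units.val_one, ← h,
    Units.coe_prod]
  exact prod_congr rfl fun p hp ↦ (hu p hp).symm

theorem card_le_ncard_squarefree_modEq_one {N t : ℕ} {P : Finset ℕ} (hP : ∀ p ∈ P, p.Prime)
    {u : ℕ → (ZMod N)ˣ} (hu : ∀ p ∈ P, (u p : ZMod N) = p) {𝒮 : Finset (Finset ℕ)}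
    (h𝒮 : ∀ S ∈ 𝒮, S ⊆ P ∧ S.Nonempty ∧ #S ≤ t ∧ ∏ p ∈ S, u p = 1) :
    #𝒮 ≤ {n : ℕ | Squarefree n ∧ n.primeFactors ⊆ P ∧ 1 ≤ n.primeFactors.card ∧
      n.primeFactors.card ≤ t ∧ n ≡ 1 [MOD N]}.ncard := by
  have hprime (S) (hS : S ∈ 𝒮) : ∀ p ∈ S, p.Prime := fun p hp ↦ hP p ((h𝒮 S hS).1 hp)
  rw [← Set.ncard_coe_finset]
  refine Set.ncard_le_ncard_of_injOn (∏ p ∈ ·, p) (fun S hS ↦ ?_)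
    (Nat.prod_primeFactors_invOn_squarefree.1.injOn.mono hprime) ?_
  · obtain ⟨hSP, hS_ne, hSt, hS₁⟩ := h𝒮 S hS
    rw [Set.mem_ofPred_eq, Nat.primeFactors_prod (hprime S hS)]
    exact ⟨Nat.squarefree_prod_of_prime (hprime S hS), hSP, card_pos.mpr hS_ne, hSt,
      Nat.prod_modEq_one_of_prod_units_eq_one (fun p hp ↦ hu p (hSP hp)) hS₁⟩
  · exact (Nat.finite_setOf_squarefree_primeFactors_subset P).subset fun n hn ↦ ⟨hn.1, hn.2.1⟩

theorem counting_products_one_mod_N_general (N : ℕ) (s : ℕ)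
    (hs : IsLeast {m : ℕ | 0 < m ∧ ∀ l : List (ZMod N)ˣ, l.length = m →
      ∃ t : List (ZMod N)ˣ, t.Sublist l ∧ t ≠ [] ∧ t.prod = 1} s)
    (P : Finset ℕ) (hP : ∀ p ∈ P, p.Prime ∧ ¬ p ∣ N)
    (y : ℝ) (hy : ∀ p ∈ P, (p : ℝ) ≤ y)
    (t : ℕ) (hts : s < t) (htv : t < P.card) :
    ((P.card.choose t : ℝ) / (P.card.choose s : ℝ) ≤
      ({n : ℕ | Squarefree n ∧ n.primeFactors ⊆ P ∧ 1 ≤ n.primeFactors.card ∧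
        n.primeFactors.card ≤ t ∧ n ≡ 1 [MOD N]}.ncard : ℝ)) ∧
    ∀ n : ℕ, Squarefree n → n.primeFactors ⊆ P → 1 ≤ n.primeFactors.card →
      n.primeFactors.card ≤ t → n ≡ 1 [MOD N] → (n : ℝ) ≤ y ^ t := by
  obtain ⟨p₀, hp₀⟩ := card_pos.mp (by omega : 0 < #P)
  have hy₁ : 1 ≤ y := le_trans (by exact_mod_cast (hP p₀ hp₀).1.one_lt.le) (hy p₀ hp₀)
  refine ⟨?_, fun n hn hnP _ hnt _ ↦
    Nat.cast_le_pow_of_squarefree hn hy₁ (fun p hp ↦ hy p (hnP hp)) hnt⟩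
  obtain ⟨u, hu⟩ : ∃ u : ℕ → (ZMod N)ˣ, ∀ p ∈ P, (u p : ZMod N) = p :=
    ⟨fun p ↦ if h : p.Coprime N then ZMod.unitOfCoprime p h else 1, fun p hp ↦ by
      simp only [dif_pos ((hP p hp).1.coprime_iff_not_dvd.mpr (hP p hp).2),
        ZMod.coe_unitOfCoprime]⟩
  choose f hfT hf₁ hfs using
    HasProdOneSublist.exists_subset_prod_eq_one_card_sdiff_lt hs.1.2 u
  have hcount := choose_le_mul_card_image_powersetCard hfT hfs hts.le htv.le
  have himage := card_le_ncard_squarefree_modEq_one (fun p hp ↦ (hP p hp).1) hu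
    (𝒮 := (P.powersetCard t).image f) (t := t) <| by
      simp only [mem_image, mem_powersetCard]
      rintro _ ⟨T, ⟨hTP, rfl⟩, rfl⟩
      have hcard := hfs T
      rw [card_sdiff_of_subset (hfT T)] at hcard
      exact ⟨(hfT T).trans hTP, card_pos.mp (by omega), card_le_card (hfT T), hf₁ T⟩
  rw [div_le_iff₀ (by exact_mod_cast Nat.choose_pos (by omega))]
  exact_mod_cast hcount.trans (by rw [mul_comm]; exact Nat.mul_le_mul_right _ himage)

/-- The counting step: with `s = s(N)` minimal so that every sequence of `s`
units of `ℤ/Nℤ` has a nonempty subsequence of product `1`, `P` a finite set of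
primes not dividing `N` all at most `y`, `v = |P|` and `v > t > s`, the number
of squarefree integers `n` with all prime factors in `P`, between `1` and `t`
prime factors, and `n ≡ 1 (mod N)`, is at least `C(v,t)/C(v,s)`; moreover each
such `n` satisfies `n ≤ y^t`. -/
theorem counting_products_one_mod_N (N : ℕ) (hN : 2 ≤ N) (s : ℕ)
    (hs : IsLeast {m : ℕ | 0 < m ∧ ∀ l : List (ZMod N)ˣ, l.length = m →
      ∃ t : List (ZMod N)ˣ, t.Sublist l ∧ t ≠ [] ∧ t.prod = 1} s)
    (P : Finset ℕ) (hP : ∀ p ∈ P, p.Prime ∧ ¬ p ∣ N)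
    (y : ℝ) (hy : ∀ p ∈ P, (p : ℝ) ≤ y)
    (t : ℕ) (hts : s < t) (htv : t < P.card) :
    ((P.card.choose t : ℝ) / (P.card.choose s : ℝ) ≤
      ({n : ℕ | Squarefree n ∧ n.primeFactors ⊆ P ∧ 1 ≤ n.primeFactors.card ∧
        n.primeFactors.card ≤ t ∧ n ≡ 1 [MOD N]}.ncard : ℝ)) ∧
    ∀ n : ℕ, Squarefree n → n.primeFactors ⊆ P → 1 ≤ n.primeFactors.card →
      n.primeFactors.card ≤ t → n ≡ 1 [MOD N] → (n : ℝ) ≤ y ^ t :=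
  counting_products_one_mod_N_general N s hs P hP y hy t hts htv
end
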